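/- arXiv:1006.3830 — 2 statements merged into one kernel-verified Lean document; each statement's English description precedes it below -/
import Mathlib

section
/- In ℚ[[q̌]], let Φ(q̌) = −log q̌ − ∑_{k=1}^{5} ((−1)^k/k)((3k)!/(k!)^3) q̌^k treated via the substitution exp(−Φ(q̌)) = q̌ · exp(∑_{k=1}^{5} ((−1)^k/k)((3k)!/(k!)^3) q̌^k). Define the formal inverse series q̌(q) of the map q(q̌) = q̌·exp(∑_{k=1}^{5} ((−1)^k/k)((3k)!/(k!)^3) q̌^k). Then (q/q̌(q))^{1/3} ≡ 1 − 2q + 5q² − 32q³ + 286q⁴ − 3038q⁵ (mod q⁶), where the cube root is the formal power series with constant term 1. -/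
open PowerSeries

/-!
The truncations modulo `X⁶` of `E = exp p` and of `u = r / X` are written down and verified as
polynomial congruences; each of `E`, `u`, `s` is then pinned down modulo `X⁶` by a uniqueness
statement. A solution of `E' = p' E` is determined by its constant term, coefficient by
coefficient. The compositional inverse and the cube root are both instances of: a polynomial `P`
with `P'(c)` invertible is injective modulo `Xⁿ` on series with constant term `c`, because
`P(a) - P(b) = (a - b) (P'(b) + k (a - b))`.
-/

theorem Polynomial.coe_ofNat {R : Type*} [CommSemiring R] (n : ℕ) [n.AtLeastTwo] :
    ((ofNat(n) : Polynomial R) : R⟦X⟧) = ofNat(n) :=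
  map_ofNat Polynomial.coeToPowerSeries.ringHom n

namespace PowerSeries

theorem derivative_ofNat {R : Type*} [CommSemiring R] (n : ℕ) [n.AtLeastTwo] :
    d⁄dX R (ofNat(n) : R⟦X⟧) = 0 := by
  simpa using (d⁄dX R).map_natCast (OfNat.ofNat n)

variable {R : Type*} [CommRing R]

theorem trunc_eq_trunc_iff {n : ℕ} {f g : R⟦X⟧} :
    trunc n f = trunc n g ↔ X ^ n ∣ f - g := by
  rw [← sub_eq_zero, ← trunc_sub, X_pow_dvd_iff, Polynomial.ext_iff]
  refine forall_congr' fun m => ?_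
  by_cases hm : m < n <;> simp [coeff_trunc, hm]

theorem X_pow_dvd_sub_of_X_pow_dvd_aeval_sub {P : Polynomial R} {a b : R⟦X⟧} {n : ℕ}
    (hab : constantCoeff a = constantCoeff b)
    (hP : IsUnit ((Polynomial.derivative P).eval (constantCoeff b)))
    (h : X ^ n ∣ Polynomial.aeval a P - Polynomial.aeval b P) : X ^ n ∣ a - b := by
  set P' := P.map (algebraMap R R⟦X⟧)
  obtain ⟨k, hk⟩ := P'.binomExpansion b (a - b)
  have hfactor : Polynomial.aeval a P - Polynomial.aeval b P =
      (a - b) * ((Polynomial.derivative P').eval b + k * (a - b)) := by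
    rw [← Polynomial.eval_map_algebraMap, ← Polynomial.eval_map_algebraMap]
    rw [add_sub_cancel] at hk
    linear_combination hk
  have hunit : IsUnit ((Polynomial.derivative P').eval b + k * (a - b)) := by
    rw [isUnit_iff_constantCoeff]
    simpa [P', Polynomial.derivative_map, Polynomial.eval_map, Polynomial.hom_eval₂, hab] using hP
  rw [hfactor] at h
  exact hunit.dvd_mul_right.mp h

theorem X_pow_dvd_sub_of_X_pow_dvd_pow_sub_pow {a b : R⟦X⟧} {k n : ℕ}
    (hab : constantCoeff a = constantCoeff b) (hk : IsUnit ((k : R) * constantCoeff b ^ (k - 1)))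
    (h : X ^ n ∣ a ^ k - b ^ k) : X ^ n ∣ a - b :=
  X_pow_dvd_sub_of_X_pow_dvd_aeval_sub (P := Polynomial.X ^ k) hab
    (by simpa [Polynomial.derivative_X_pow] using hk) (by simpa using h)

theorem X_pow_succ_dvd_sub_of_derivative_eq_mul [IsAddTorsionFree R] {p E F : R⟦X⟧} {n : ℕ}
    (hE : d⁄dX R E = d⁄dX R p * E) (hF : X ^ n ∣ d⁄dX R F - d⁄dX R p * F)
    (h0 : constantCoeff E = constantCoeff F) : X ^ (n + 1) ∣ E - F := by
  suffices ∀ m ≤ n, X ^ (m + 1) ∣ E - F from this n le_rfl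
  intro m hm
  induction m with
  | zero => simpa [X_dvd_iff, sub_eq_zero] using h0
  | succ m ih =>
    have hD := ih (by omega)
    have hder : X ^ (m + 1) ∣ d⁄dX R (E - F) := by
      rw [show d⁄dX R (E - F) = d⁄dX R p * (E - F) - (d⁄dX R F - d⁄dX R p * F) by
        rw [map_sub, hE]; ring]
      exact dvd_sub (dvd_mul_of_dvd_right hD _) ((pow_dvd_pow X (by omega)).trans hF)
    have hcoeff : coeff (m + 1) (E - F) = 0 := by
      have := X_pow_dvd_iff.mp hder m (by omega)
      rw [coeff_derivative, mul_comm, ← Nat.cast_succ, ← nsmul_eq_mul] at this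
      exact (smul_eq_zero.mp this).resolve_left m.succ_ne_zero
    rw [X_pow_dvd_iff] at hD ⊢
    intro k hk
    rcases Nat.lt_succ_iff_lt_or_eq.mp hk with hk | rfl
    exacts [hD k hk, hcoeff]

end PowerSeries

/-- `E = exp p` modulo `X⁶`, from the recursion `(n + 1) eₙ₊₁ = ∑ᵢ (i + 1) pᵢ₊₁ eₙ₋ᵢ`. -/
noncomputable def mirrorExpTrunc : Polynomial ℚ :=
  1 - 6 * Polynomial.X + 63 * Polynomial.X ^ 2 - 866 * Polynomial.X ^ 3
    + 13899 * Polynomial.X ^ 4 - 246366 * Polynomial.X ^ 5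

/-- `u = r / X` modulo `X⁶`, solving `[Xⁿ⁺¹] Q(X u) = 0` for `uₙ` one `n` at a time. -/
noncomputable def inverseMirrorUnitTrunc : ℚ⟦X⟧ :=
  1 + 6 * X + 9 * X ^ 2 + 56 * X ^ 3 - 300 * X ^ 4 + 3942 * X ^ 5

theorem derivative_mirrorExponent :
    d⁄dX ℚ (PowerSeries.mk fun k =>
      if 1 ≤ k ∧ k ≤ 5 then
        ((-1) ^ k / (k : ℚ)) * ((Nat.factorial (3 * k) : ℚ) / ((Nat.factorial k : ℚ)) ^ 3)
      else 0) = -6 + 90 * X - 1680 * X ^ 2 + 34650 * X ^ 3 - 756756 * X ^ 4 := by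
  ext n
  simp only [coeff_derivative, coeff_mk, ← map_ofNat (C (R := ℚ)), map_add, map_sub, map_neg,
    coeff_C_mul, coeff_C, coeff_X, coeff_X_pow]
  rcases n with _ | _ | _ | _ | _ | n
  iterate 5 norm_num [Nat.factorial]
  rw [if_neg (by omega)]
  simp

theorem X_pow_dvd_derivative_mirrorExpTrunc_sub :
    X ^ 5 ∣ d⁄dX ℚ (mirrorExpTrunc : ℚ⟦X⟧)
      - (-6 + 90 * X - 1680 * X ^ 2 + 34650 * X ^ 3 - 756756 * X ^ 4)
        * (mirrorExpTrunc : ℚ⟦X⟧) := by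
  simp [mirrorExpTrunc, Polynomial.coe_ofNat, derivative_ofNat]
  ring_nf
  -- after `ring_nf` every monomial left has degree at least `5`
  repeat' first
    | apply dvd_add | apply dvd_sub | apply dvd_neg.2
    | exact (pow_dvd_pow _ (by norm_num)).mul_right _

theorem X_pow_dvd_aeval_X_mul_inverseMirrorUnitTrunc_sub :
    X ^ 7 ∣ Polynomial.aeval (X * inverseMirrorUnitTrunc) (Polynomial.X * mirrorExpTrunc) - X := by
  simp [mirrorExpTrunc, inverseMirrorUnitTrunc, map_ofNat]
  ring_nf
  repeat' first
    | apply dvd_add | apply dvd_sub | apply dvd_neg.2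
    | exact (pow_dvd_pow _ (by norm_num)).mul_right _

theorem X_pow_dvd_cube_mul_inverseMirrorUnitTrunc_sub_one :
    X ^ 6 ∣ (1 - 2 * X + 5 * X ^ 2 - 32 * X ^ 3 + 286 * X ^ 4 - 3038 * X ^ 5) ^ 3
      * inverseMirrorUnitTrunc - 1 := by
  simp only [inverseMirrorUnitTrunc]
  ring_nf
  repeat' first
    | apply dvd_add | apply dvd_sub | apply dvd_neg.2
    | exact (pow_dvd_pow _ (by norm_num)).mul_right _

theorem trunc_X_mul_eq_of_X_pow_dvd_sub_mirrorExpTrunc {E : ℚ⟦X⟧}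
    (hE : X ^ 6 ∣ E - (mirrorExpTrunc : ℚ⟦X⟧)) :
    trunc 7 (X * E) = Polynomial.X * mirrorExpTrunc := by
  rw [← trunc_coe_eq_self (n := 7) (f := Polynomial.X * mirrorExpTrunc)
      (by unfold mirrorExpTrunc; compute_degree!),
    trunc_eq_trunc_iff, Polynomial.coe_mul, Polynomial.coe_X, ← mul_sub, pow_succ']
  exact mul_dvd_mul_left X hE

theorem X_pow_dvd_sub_inverseMirrorUnitTrunc {u : ℚ⟦X⟧}
    (hu : X ^ 7 ∣ Polynomial.aeval (X * u) (Polynomial.X * mirrorExpTrunc) - X) :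
    X ^ 6 ∣ u - inverseMirrorUnitTrunc := by
  have hdiff : X ^ 7 ∣ Polynomial.aeval (X * u) (Polynomial.X * mirrorExpTrunc)
      - Polynomial.aeval (X * inverseMirrorUnitTrunc) (Polynomial.X * mirrorExpTrunc) := by
    simpa only [sub_sub_sub_cancel_right] using
      dvd_sub hu X_pow_dvd_aeval_X_mul_inverseMirrorUnitTrunc_sub
  have := X_pow_dvd_sub_of_X_pow_dvd_aeval_sub (by simp)
    (by simp [mirrorExpTrunc, map_ofNat]) hdiff
  rwa [← mul_sub, pow_succ', mul_dvd_mul_iff_left X_ne_zero] at this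

theorem X_pow_dvd_cube_sub_of_cube_mul_eq_one {s u : ℚ⟦X⟧} (hs : s ^ 3 * u = 1)
    (hu : X ^ 6 ∣ u - inverseMirrorUnitTrunc) :
    X ^ 6 ∣ s ^ 3 - (1 - 2 * X + 5 * X ^ 2 - 32 * X ^ 3 + 286 * X ^ 4 - 3038 * X ^ 5) ^ 3 := by
  have hunit : IsUnit inverseMirrorUnitTrunc := by
    simp [isUnit_iff_constantCoeff, inverseMirrorUnitTrunc]
  rw [← hunit.dvd_mul_right, show ∀ t : ℚ⟦X⟧, (s ^ 3 - t ^ 3) * inverseMirrorUnitTrunc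
      = s ^ 3 * (inverseMirrorUnitTrunc - u) - (t ^ 3 * inverseMirrorUnitTrunc - 1) from
    fun t => by linear_combination hs]
  exact dvd_sub (dvd_mul_of_dvd_right (dvd_sub_comm.mp hu) _)
    X_pow_dvd_cube_mul_inverseMirrorUnitTrunc_sub_one

theorem stmt11_general (p E Q r u s : ℚ⟦X⟧)
    (hp : p = PowerSeries.mk fun k =>
      if 1 ≤ k ∧ k ≤ 5 then
        ((-1) ^ k / (k : ℚ)) * ((Nat.factorial (3 * k) : ℚ) / ((Nat.factorial k : ℚ)) ^ 3)
      else 0)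
    (hE0 : PowerSeries.constantCoeff E = 1)
    (hE : PowerSeries.derivativeFun E = PowerSeries.derivativeFun p * E)
    (hQ : Q = PowerSeries.X * E)
    (hrinv : ∀ N : ℕ,
      PowerSeries.trunc N (Polynomial.aeval r (PowerSeries.trunc N Q)) =
        PowerSeries.trunc N (PowerSeries.X : ℚ⟦X⟧))
    (hu : r = PowerSeries.X * u)
    (hs0 : PowerSeries.constantCoeff s = 1)
    (hs : s ^ 3 * u = 1) :
    PowerSeries.trunc 6 s =
      PowerSeries.trunc 6 (1 - 2 * PowerSeries.X + 5 * PowerSeries.X ^ 2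
        - 32 * PowerSeries.X ^ 3 + 286 * PowerSeries.X ^ 4 - 3038 * PowerSeries.X ^ 5) := by
  subst hp hQ hu
  have hEmod : X ^ 6 ∣ E - (mirrorExpTrunc : ℚ⟦X⟧) :=
    X_pow_succ_dvd_sub_of_derivative_eq_mul hE
      (derivative_mirrorExponent ▸ X_pow_dvd_derivative_mirrorExpTrunc_sub)
      (by simp [hE0, mirrorExpTrunc, Polynomial.coe_ofNat])
  have hinv := trunc_eq_trunc_iff.mp (hrinv 7)
  rw [trunc_X_mul_eq_of_X_pow_dvd_sub_mirrorExpTrunc hEmod] at hinv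
  have hcube :=
    X_pow_dvd_cube_sub_of_cube_mul_eq_one hs (X_pow_dvd_sub_inverseMirrorUnitTrunc hinv)
  exact trunc_eq_trunc_iff.mpr
    (X_pow_dvd_sub_of_X_pow_dvd_pow_sub_pow (by simp [hs0]) (by norm_num) hcube)

/-- Let `p = ∑_{k=1}^5 ((-1)^k/k)((3k)!/(k!)³) q̌^k`, let `E = exp p` (characterized by
`E(0) = 1` and `E' = p' E`), let `Q(q̌) = q̌ E(q̌)` be the (truncated) mirror map, and let
`r = q̌(q)` be its formal compositional inverse (so `Q(r) = q` and `r = q·u` for a unit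
part `u`).  Then the cube root `s` of `q/r = u⁻¹` with constant term `1` satisfies
`s ≡ 1 - 2q + 5q² - 32q³ + 286q⁴ - 3038q⁵ (mod q⁶)`. -/
theorem stmt11 (p E Q r u s : ℚ⟦X⟧)
    (hp : p = PowerSeries.mk fun k =>
      if 1 ≤ k ∧ k ≤ 5 then
        ((-1) ^ k / (k : ℚ)) * ((Nat.factorial (3 * k) : ℚ) / ((Nat.factorial k : ℚ)) ^ 3)
      else 0)
    (hE0 : PowerSeries.constantCoeff E = 1)
    (hE : PowerSeries.derivativeFun E = PowerSeries.derivativeFun p * E)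
    (hQ : Q = PowerSeries.X * E)
    (hr0 : PowerSeries.constantCoeff r = 0)
    (hrinv : ∀ N : ℕ,
      PowerSeries.trunc N (Polynomial.aeval r (PowerSeries.trunc N Q)) =
        PowerSeries.trunc N (PowerSeries.X : ℚ⟦X⟧))
    (hu : r = PowerSeries.X * u)
    (hs0 : PowerSeries.constantCoeff s = 1)
    (hs : s ^ 3 * u = 1) :
    PowerSeries.trunc 6 s =
      PowerSeries.trunc 6 (1 - 2 * PowerSeries.X + 5 * PowerSeries.X ^ 2
        - 32 * PowerSeries.X ^ 3 + 286 * PowerSeries.X ^ 4 - 3038 * PowerSeries.X ^ 5) :=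
  stmt11_general p E Q r u s hp hE0 hE hQ hrinv hu hs0 hs
end

section
/- Let u : Δ → ℂ^n be continuous on the closed unit disk and holomorphic on the open disk, with components u = (u_1, …, u_n) all nowhere zero on the closed disk, and suppose that |u_i(z)| = |u_1(z)| for all z ∈ ∂Δ and all i. Then each ratio u_i/u_1 is a constant c_i with |c_i| = 1; i.e., the image of u lies in the complex line {(ζ, c_1ζ, …, c_{n−1}ζ) : ζ ∈ ℂ^×} (after relabeling). -/
/-!
The quotient `u i / u 0` is holomorphic on the disk, continuous and nowhere zero on its closure,
and has modulus one on the boundary circle. The maximum modulus principle, applied to it and to its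
reciprocal, gives modulus one on the whole closed disk; a holomorphic function whose modulus
attains its maximum at an interior point is constant.
-/

open Bornology Metric Set Function

theorem DiffContOnCl.div {𝕜 E : Type*} [NontriviallyNormedField 𝕜] [NormedAddCommGroup E]
    [NormedSpace 𝕜 E] {f g : E → 𝕜} {s : Set E} (hf : DiffContOnCl 𝕜 f s)
    (hg : DiffContOnCl 𝕜 g s) (h₀ : ∀ x ∈ closure s, g x ≠ 0) :
    DiffContOnCl 𝕜 (fun x => f x / g x) s :=
  ⟨by
    simp_rw [div_eq_mul_inv]
    exact hf.1.fun_mul (hg.1.fun_inv fun x hx => h₀ x (subset_closure hx)),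
    hf.2.div hg.2 h₀⟩

namespace Complex

variable {E : Type*} [NormedAddCommGroup E] [NormedSpace ℂ E] {U : Set E} {f g : E → ℂ}

theorem norm_le_norm_of_forall_mem_frontier_norm_le [Nontrivial E] (hU : IsBounded U)
    (hf : DiffContOnCl ℂ f U) (hg : DiffContOnCl ℂ g U) (hg₀ : ∀ z ∈ closure U, g z ≠ 0)
    (hfg : ∀ z ∈ frontier U, ‖f z‖ ≤ ‖g z‖) {z : E} (hz : z ∈ closure U) : ‖f z‖ ≤ ‖g z‖ := by
  have hquot : ‖f z / g z‖ ≤ 1 := by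
    refine norm_le_of_forall_mem_frontier_norm_le hU (hf.div hg hg₀) (fun w hw => ?_) hz
    rw [norm_div]
    exact div_le_one_of_le₀ (hfg w hw) (norm_nonneg _)
  rwa [norm_div, div_le_one (norm_pos_iff.2 (hg₀ z hz))] at hquot

theorem norm_eq_norm_of_forall_mem_frontier_norm_eq [Nontrivial E] (hU : IsBounded U)
    (hf : DiffContOnCl ℂ f U) (hg : DiffContOnCl ℂ g U) (hf₀ : ∀ z ∈ closure U, f z ≠ 0)
    (hg₀ : ∀ z ∈ closure U, g z ≠ 0) (hfg : ∀ z ∈ frontier U, ‖f z‖ = ‖g z‖) {z : E}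
    (hz : z ∈ closure U) : ‖f z‖ = ‖g z‖ :=
  le_antisymm
    (norm_le_norm_of_forall_mem_frontier_norm_le hU hf hg hg₀ (fun w hw => (hfg w hw).le) hz)
    (norm_le_norm_of_forall_mem_frontier_norm_le hU hg hf hf₀ (fun w hw => (hfg w hw).ge) hz)

theorem exists_norm_eq_one_eq_mul_of_norm_eq (hc : IsPreconnected U) (ho : IsOpen U)
    (hne : U.Nonempty) (hf : DiffContOnCl ℂ f U) (hg : DiffContOnCl ℂ g U)
    (hg₀ : ∀ z ∈ closure U, g z ≠ 0) (hfg : ∀ z ∈ closure U, ‖f z‖ = ‖g z‖) :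
    ∃ c : ℂ, ‖c‖ = 1 ∧ ∀ z ∈ closure U, f z = c * g z := by
  obtain ⟨z₀, hz₀⟩ := hne
  have hquot : ∀ z ∈ closure U, ‖f z / g z‖ = 1 := fun z hz => by
    rw [norm_div, hfg z hz, div_self (norm_ne_zero_iff.2 (hg₀ z hz))]
  have hmax : IsMaxOn (norm ∘ fun z => f z / g z) U z₀ := isMaxOn_iff.2 fun z hz =>
    (hquot z (subset_closure hz)).trans (hquot z₀ (subset_closure hz₀)).symm |>.le
  have hconst := eqOn_closure_of_isPreconnected_of_isMaxOn_norm hc ho (hf.div hg hg₀) hz₀ hmax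
  refine ⟨f z₀ / g z₀, hquot z₀ (subset_closure hz₀), fun z hz => ?_⟩
  rw [← (div_mul_cancel₀ (f z) (hg₀ z hz))]
  exact congrArg (· * g z) (hconst hz)

theorem exists_norm_eq_one_eq_mul_of_frontier_norm_eq [Nontrivial E] (hU : IsBounded U)
    (hc : IsPreconnected U) (ho : IsOpen U) (hne : U.Nonempty) (hf : DiffContOnCl ℂ f U)
    (hg : DiffContOnCl ℂ g U) (hf₀ : ∀ z ∈ closure U, f z ≠ 0)
    (hg₀ : ∀ z ∈ closure U, g z ≠ 0) (hfg : ∀ z ∈ frontier U, ‖f z‖ = ‖g z‖) :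
    ∃ c : ℂ, ‖c‖ = 1 ∧ ∀ z ∈ closure U, f z = c * g z :=
  exists_norm_eq_one_eq_mul_of_norm_eq hc ho hne hf hg hg₀ fun _ =>
    norm_eq_norm_of_forall_mem_frontier_norm_eq hU hf hg hf₀ hg₀ hfg

end Complex

/-- If `u_0, …, u_{n-1}` are holomorphic on the open unit disk, continuous on the closed
disk, nowhere zero on the closed disk, and `|u_i| = |u_0|` on the boundary circle, then each
`u_i` is a unimodular constant multiple of `u_0`: the disk lies on a complex line. -/
theorem stmt16 (n : ℕ) [NeZero n] (u : Fin n → ℂ → ℂ)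
    (hd : ∀ i, DifferentiableOn ℂ (u i) (Metric.ball 0 1))
    (hc : ∀ i, ContinuousOn (u i) (Metric.closedBall 0 1))
    (hnz : ∀ i, ∀ z ∈ Metric.closedBall (0 : ℂ) 1, u i z ≠ 0)
    (hb : ∀ i, ∀ z ∈ Metric.sphere (0 : ℂ) 1, ‖u i z‖ = ‖u 0 z‖) :
    ∀ i, ∃ c : ℂ, ‖c‖ = 1 ∧
      ∀ z ∈ Metric.closedBall (0 : ℂ) 1, u i z = c * u 0 z := by
  intro i
  have hdc : ∀ j, DiffContOnCl ℂ (u j) (ball 0 1) := fun j => .mk_ball (hd j) (hc j)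
  have hclosure : closure (ball (0 : ℂ) 1) = closedBall 0 1 := closure_ball 0 one_ne_zero
  have hfrontier : frontier (ball (0 : ℂ) 1) = sphere 0 1 := frontier_ball 0 one_ne_zero
  rw [← hclosure]
  refine Complex.exists_norm_eq_one_eq_mul_of_frontier_norm_eq isBounded_ball
    (convex_ball 0 1).isPreconnected isOpen_ball ⟨0, mem_ball_self one_pos⟩ (hdc i) (hdc 0)
    ?_ ?_ ?_
  · rw [hclosure]; exact hnz i
  · rw [hclosure]; exact hnz 0
  · rw [hfrontier]; exact hb i
end
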